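/- Let (Ω, F, μ) be a probability space, let x : Ω → ℝⁿ and y : Ω → {1, …, C} be measurable, and let P_c := μ[1_{y=c} | σ(x)] denote the conditional probability of the cluster-c label given σ(x). Fix integers C ≥ 1 and p ≥ 1, a step size β > 0, and balancing parameters ρ > 0 and η > 0. Let Φ_1, …, Φ_C : ℝⁿ → [0,1] be measurable, let w^1, …, w^C ∈ ℝ^p be prototype vectors, let ξ : Ω → ℝ^p be measurable with ∫ ‖ξ‖² dμ < ∞, and let G : Ω → ℝ^C be measurable such that for μ-almost every ω, G(ω) is a probability vector (entries in [0,1] summing to 1); set κ(ω) := β‖G(ω)‖² / (2 + β‖G(ω)‖²). Suppose the encoding error e : Ω → ℝ^p satisfies, for μ-almost every ω and every coordinate j, e_j(ω) = (1 + κ(ω)) Σ_{c=1}^C (P_c(ω) − Φ_c(x(ω))) (w^c)_j + κ(ω) ξ_j(ω), and suppose that for every c there are constants A_c ≥ 0 and E_c ≥ 0 such that ∫ |Φ_c(x(ω)) − P_c(ω)|² dμ(ω) ≤ (1+η) A_c + (1+η⁻¹) E_c. Then ∫ ‖e‖² dμ ≤ (1+ρ)(1+η) (1 + β/(2+β))²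 (Σ_{c=1}^C ‖w^c‖²) (Σ_{c=1}^C A_c) + (1+ρ)(1+η⁻¹) (1 + β/(2+β))² (Σ_{c=1}^C ‖w^c‖²) (Σ_{c=1}^C E_c) + (1+ρ⁻¹) (β/(2+β))² ∫ ‖ξ‖² dμ. -/

import Mathlib

/-!
Write `d_c := P_c − Φ_c ∘ x`. Since `G` is a probability vector, `‖G‖² ≤ 1`, and as `s ↦ s / (2 + s)`
is increasing, `0 ≤ κ ≤ β / (2 + β)`. Pointwise, the Peter–Paul inequality
`‖u + v‖² ≤ (1 + ρ)‖u‖² + (1 + ρ⁻¹)‖v‖²` and Cauchy–Schwarz `‖∑ d_c w^c‖² ≤ (∑ d_c²)(∑ ‖w^c‖²)` give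
`‖e‖² ≤ (1 + ρ)(1 + β/(2+β))² (∑ ‖w^c‖²) ∑ d_c² + (1 + ρ⁻¹)(β/(2+β))² ‖ξ‖²`.
Integrating and inserting the cluster-wise bounds on `∫ d_c²` gives the claim; `d_c` is bounded
because `|P_c| ≤ 1`, so every term is integrable.
-/

open MeasureTheory Finset

lemma sq_add_le_one_add_mul_sq_add {ρ : ℝ} (hρ : 0 < ρ) (a b : ℝ) :
    (a + b) ^ 2 ≤ (1 + ρ) * a ^ 2 + (1 + ρ⁻¹) * b ^ 2 := by
  have hsq : 0 ≤ ρ⁻¹ * (ρ * a - b) ^ 2 := by positivity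
  have hρρ : ρ⁻¹ * ρ = 1 := inv_mul_cancel₀ hρ.ne'
  nlinarith

lemma norm_add_sq_le_one_add_mul_norm_sq_add {E : Type*} [SeminormedAddCommGroup E]
    {ρ : ℝ} (hρ : 0 < ρ) (u v : E) :
    ‖u + v‖ ^ 2 ≤ (1 + ρ) * ‖u‖ ^ 2 + (1 + ρ⁻¹) * ‖v‖ ^ 2 :=
  (pow_le_pow_left₀ (norm_nonneg _) (norm_add_le u v) 2).trans
    (sq_add_le_one_add_mul_sq_add hρ _ _)

lemma norm_sum_smul_sq_le {ι E : Type*} [SeminormedAddCommGroup E] [NormedSpace ℝ E]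
    (s : Finset ι) (a : ι → ℝ) (v : ι → E) :
    ‖∑ i ∈ s, a i • v i‖ ^ 2 ≤ (∑ i ∈ s, a i ^ 2) * ∑ i ∈ s, ‖v i‖ ^ 2 := by
  have htri : ‖∑ i ∈ s, a i • v i‖ ≤ ∑ i ∈ s, |a i| * ‖v i‖ :=
    (norm_sum_le _ _).trans_eq (sum_congr rfl fun i _ => by rw [norm_smul, Real.norm_eq_abs])
  calc ‖∑ i ∈ s, a i • v i‖ ^ 2 ≤ (∑ i ∈ s, |a i| * ‖v i‖) ^ 2 :=
        pow_le_pow_left₀ (norm_nonneg _) htri 2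
    _ ≤ (∑ i ∈ s, |a i| ^ 2) * ∑ i ∈ s, ‖v i‖ ^ 2 := sum_mul_sq_le_sq_mul_sq _ _ _
    _ = (∑ i ∈ s, a i ^ 2) * ∑ i ∈ s, ‖v i‖ ^ 2 := by simp only [sq_abs]

lemma EuclideanSpace.norm_sq_le_one_of_nonneg_of_sum_eq_one {ι : Type*} [Fintype ι]
    {v : EuclideanSpace ℝ ι} (h0 : ∀ i, 0 ≤ v i) (h1 : ∑ i, v i = 1) : ‖v‖ ^ 2 ≤ 1 := by
  have hle : ∀ i, v i ≤ 1 := fun i => h1 ▸ single_le_sum (fun j _ => h0 j) (mem_univ i)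
  calc ‖v‖ ^ 2 = ∑ i, v i ^ 2 := by simp [EuclideanSpace.norm_sq_eq, sq_abs]
    _ ≤ ∑ i, v i := sum_le_sum fun i _ => by nlinarith [h0 i, hle i]
    _ = 1 := h1

lemma div_add_self_le_div_add_self {a b c : ℝ} (hc : 0 < c) (ha : 0 ≤ a) (hab : a ≤ b) :
    a / (c + a) ≤ b / (c + b) := by
  rw [div_le_div_iff₀ (by linarith) (by linarith)]
  nlinarith

lemma norm_one_add_smul_sum_smul_add_smul_sq_le {ι E : Type*} [SeminormedAddCommGroup E]
    [NormedSpace ℝ E] {ρ κ K : ℝ} (hρ : 0 < ρ) (hκ0 : 0 ≤ κ) (hκK : κ ≤ K)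
    (s : Finset ι) (d : ι → ℝ) (w : ι → E) (v : E) :
    ‖(1 + κ) • ∑ i ∈ s, d i • w i + κ • v‖ ^ 2
      ≤ (1 + ρ) * (1 + K) ^ 2 * (∑ i ∈ s, ‖w i‖ ^ 2) * ∑ i ∈ s, d i ^ 2
        + (1 + ρ⁻¹) * K ^ 2 * ‖v‖ ^ 2 := by
  calc ‖(1 + κ) • ∑ i ∈ s, d i • w i + κ • v‖ ^ 2
      ≤ (1 + ρ) * ‖(1 + κ) • ∑ i ∈ s, d i • w i‖ ^ 2 + (1 + ρ⁻¹) * ‖κ • v‖ ^ 2 :=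
        norm_add_sq_le_one_add_mul_norm_sq_add hρ _ _
    _ = (1 + ρ) * (1 + κ) ^ 2 * ‖∑ i ∈ s, d i • w i‖ ^ 2 + (1 + ρ⁻¹) * κ ^ 2 * ‖v‖ ^ 2 := by
        rw [norm_smul, norm_smul, Real.norm_of_nonneg (by linarith), Real.norm_of_nonneg hκ0]
        ring
    _ ≤ (1 + ρ) * (1 + K) ^ 2 * ((∑ i ∈ s, d i ^ 2) * ∑ i ∈ s, ‖w i‖ ^ 2)
          + (1 + ρ⁻¹) * K ^ 2 * ‖v‖ ^ 2 := by
        gcongr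
        exact norm_sum_smul_sq_le s d w
    _ = _ := by ring

section Integrals

variable {Ω : Type*} {m₀ : MeasurableSpace Ω} {μ : Measure Ω}

lemma integrable_sq_sub_of_ae_abs_le [IsFiniteMeasure μ] {f g : Ω → ℝ}
    (hf : AEStronglyMeasurable f μ) (hg : AEStronglyMeasurable g μ) {R S : ℝ}
    (hfR : ∀ᵐ ω ∂μ, |f ω| ≤ R) (hgS : ∀ᵐ ω ∂μ, |g ω| ≤ S) :
    Integrable (fun ω => (f ω - g ω) ^ 2) μ := by
  refine (MemLp.of_bound (p := 2) (hf.sub hg) (R + S) ?_).integrable_sq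
  filter_upwards [hfR, hgS] with ω hfω hgω
  exact (abs_sub (f ω) (g ω)).trans (add_le_add hfω hgω)

lemma ae_abs_condExp_ite_le_one {m : MeasurableSpace Ω} (q : Ω → Prop) [DecidablePred q] :
    ∀ᵐ ω ∂μ, |μ[fun ω => if q ω then (1 : ℝ) else 0 | m] ω| ≤ 1 :=
  ae_bdd_abs_condExp_of_ae_bdd_abs <| .of_forall fun ω => by split_ifs <;> simp

lemma integral_le_mul_integral_add_mul_integral {f g h : Ω → ℝ} (hf : 0 ≤ᵐ[μ] f)
    (hg : Integrable g μ) (hh : Integrable h μ) {a b : ℝ}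
    (hfgh : ∀ᵐ ω ∂μ, f ω ≤ a * g ω + b * h ω) :
    ∫ ω, f ω ∂μ ≤ a * ∫ ω, g ω ∂μ + b * ∫ ω, h ω ∂μ := by
  rw [← integral_const_mul, ← integral_const_mul, ← integral_add (hg.const_mul a) (hh.const_mul b)]
  exact integral_mono_of_nonneg hf ((hg.const_mul a).add (hh.const_mul b)) hfgh

end Integrals

lemma div_two_add_mul_norm_sq_mem_Icc {ι : Type*} [Fintype ι] {β : ℝ} (hβ : 0 ≤ β)
    {g : EuclideanSpace ℝ ι} (h0 : ∀ i, 0 ≤ g i) (h1 : ∑ i, g i = 1) :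
    β * ‖g‖ ^ 2 / (2 + β * ‖g‖ ^ 2) ∈ Set.Icc 0 (β / (2 + β)) := by
  have hg : β * ‖g‖ ^ 2 ≤ β := mul_le_of_le_one_right hβ
    (EuclideanSpace.norm_sq_le_one_of_nonneg_of_sum_eq_one h0 h1)
  exact ⟨by positivity, div_add_self_le_div_add_self two_pos (by positivity) hg⟩

theorem encoding_error_bound_decomposition_general
    {Ω : Type*} [MeasurableSpace Ω] (μ : Measure Ω) [IsProbabilityMeasure μ]
    (n C p : ℕ)
    (x : Ω → EuclideanSpace ℝ (Fin n)) (hx : Measurable x)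
    (y : Ω → Fin C)
    (P : Fin C → Ω → ℝ)
    (hP : ∀ c, P c = μ[(fun ω => if y ω = c then (1 : ℝ) else 0) |
      MeasurableSpace.comap x inferInstance])
    (β : ℝ) (hβ : 0 < β) (ρ : ℝ) (hρ : 0 < ρ) (η : ℝ)
    (Φ : Fin C → EuclideanSpace ℝ (Fin n) → ℝ)
    (hΦmeas : ∀ c, Measurable (Φ c))
    (hΦ01 : ∀ c t, Φ c t ∈ Set.Icc (0 : ℝ) 1)
    (w : Fin C → EuclideanSpace ℝ (Fin p))
    (ξ : Ω → EuclideanSpace ℝ (Fin p))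
    (hξ2 : Integrable (fun ω => ‖ξ ω‖ ^ 2) μ)
    (G : Ω → EuclideanSpace ℝ (Fin C))
    (hGprob : ∀ᵐ ω ∂μ, (∀ i, G ω i ∈ Set.Icc (0 : ℝ) 1) ∧ ∑ i, G ω i = 1)
    (κ : Ω → ℝ) (hκ : κ = fun ω => β * ‖G ω‖ ^ 2 / (2 + β * ‖G ω‖ ^ 2))
    (e : Ω → EuclideanSpace ℝ (Fin p))
    (he : ∀ᵐ ω ∂μ, ∀ j, e ω j
      = (1 + κ ω) * (∑ c, (P c ω - Φ c (x ω)) * w c j) + κ ω * ξ ω j)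
    (A E : Fin C → ℝ)
    (happrox : ∀ c, ∫ ω, |Φ c (x ω) - P c ω| ^ 2 ∂μ
      ≤ (1 + η) * A c + (1 + η⁻¹) * E c) :
    ∫ ω, ‖e ω‖ ^ 2 ∂μ
      ≤ (1 + ρ) * (1 + η) * (1 + β / (2 + β)) ^ 2 * (∑ c, ‖w c‖ ^ 2) * (∑ c, A c)
        + (1 + ρ) * (1 + η⁻¹) * (1 + β / (2 + β)) ^ 2 * (∑ c, ‖w c‖ ^ 2) * (∑ c, E c)
        + (1 + ρ⁻¹) * (β / (2 + β)) ^ 2 * ∫ ω, ‖ξ ω‖ ^ 2 ∂μ := by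
  set K := β / (2 + β)
  set d : Fin C → Ω → ℝ := fun c ω => P c ω - Φ c (x ω)
  have hd_int : ∀ c, Integrable (fun ω => d c ω ^ 2) μ := fun c =>
    integrable_sq_sub_of_ae_abs_le (hP c ▸ integrable_condExp).aestronglyMeasurable
      ((hΦmeas c).comp hx).aestronglyMeasurable
      (hP c ▸ ae_abs_condExp_ite_le_one (fun ω => y ω = c))
      (.of_forall fun ω => abs_le.2 ⟨by linarith [(hΦ01 c (x ω)).1], (hΦ01 c (x ω)).2⟩)
  have hpt : ∀ᵐ ω ∂μ, ‖e ω‖ ^ 2 ≤ (1 + ρ) * (1 + K) ^ 2 * (∑ c, ‖w c‖ ^ 2) * ∑ c, d c ω ^ 2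
      + (1 + ρ⁻¹) * K ^ 2 * ‖ξ ω‖ ^ 2 := by
    filter_upwards [he, hGprob] with ω hω hGω
    obtain ⟨hκ0, hκK⟩ : κ ω ∈ Set.Icc 0 K :=
      hκ ▸ div_two_add_mul_norm_sq_mem_Icc hβ.le (fun i => (hGω.1 i).1) hGω.2
    have he_vec : e ω = (1 + κ ω) • ∑ c, d c ω • w c + κ ω • ξ ω := by
      ext j; simp [hω j, d, mul_sum]
    exact he_vec ▸ norm_one_add_smul_sum_smul_add_smul_sq_le hρ hκ0 hκK _ _ _ _
  have hD : ∫ ω, ∑ c, d c ω ^ 2 ∂μ ≤ (1 + η) * (∑ c, A c) + (1 + η⁻¹) * (∑ c, E c) := by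
    rw [integral_finsetSum _ fun c _ => hd_int c, mul_sum, mul_sum, ← sum_add_distrib]
    refine sum_le_sum fun c _ => le_of_eq_of_le ?_ (happrox c)
    simp only [d, sq_abs, ← neg_sub (P c _), neg_sq]
  calc ∫ ω, ‖e ω‖ ^ 2 ∂μ
      ≤ (1 + ρ) * (1 + K) ^ 2 * (∑ c, ‖w c‖ ^ 2) * ∫ ω, ∑ c, d c ω ^ 2 ∂μ
          + (1 + ρ⁻¹) * K ^ 2 * ∫ ω, ‖ξ ω‖ ^ 2 ∂μ :=
        integral_le_mul_integral_add_mul_integral (.of_forall fun ω => sq_nonneg _)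
          (integrable_finsetSum _ fun c _ => hd_int c) hξ2 hpt
    _ ≤ (1 + ρ) * (1 + K) ^ 2 * (∑ c, ‖w c‖ ^ 2) * ((1 + η) * (∑ c, A c) + (1 + η⁻¹) * (∑ c, E c))
          + (1 + ρ⁻¹) * K ^ 2 * ∫ ω, ‖ξ ω‖ ^ 2 ∂μ := by
        gcongr
    _ = _ := by ring

/-- Deterministic conditional form of the encoding-error-bound theorem: under
the steady-state NLMS error representation for `e` and the per-cluster
posterior-approximation bounds `∫ |Φ_c∘x − P_c|² ≤ (1+η)A_c + (1+η⁻¹)E_c`, the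
total encoding error decomposes as
`∫ ‖e‖² ≤ (1+ρ)(1+η)(1 + β/(2+β))²(Σ_c ‖w^c‖²)(Σ_c A_c)
  + (1+ρ)(1+η⁻¹)(1 + β/(2+β))²(Σ_c ‖w^c‖²)(Σ_c E_c)
  + (1+ρ⁻¹)(β/(2+β))² ∫ ‖ξ‖²`. -/
theorem encoding_error_bound_decomposition
    {Ω : Type*} [MeasurableSpace Ω] (μ : Measure Ω) [IsProbabilityMeasure μ]
    (n C p : ℕ) (hC : 1 ≤ C) (hp : 1 ≤ p)
    (x : Ω → EuclideanSpace ℝ (Fin n)) (hx : Measurable x)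
    (y : Ω → Fin C) (hy : Measurable y)
    (P : Fin C → Ω → ℝ)
    (hP : ∀ c, P c = μ[(fun ω => if y ω = c then (1 : ℝ) else 0) |
      MeasurableSpace.comap x inferInstance])
    (β : ℝ) (hβ : 0 < β) (ρ : ℝ) (hρ : 0 < ρ) (η : ℝ) (hη : 0 < η)
    (Φ : Fin C → EuclideanSpace ℝ (Fin n) → ℝ)
    (hΦmeas : ∀ c, Measurable (Φ c))
    (hΦ01 : ∀ c t, Φ c t ∈ Set.Icc (0 : ℝ) 1)
    (w : Fin C → EuclideanSpace ℝ (Fin p))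
    (ξ : Ω → EuclideanSpace ℝ (Fin p)) (hξ : Measurable ξ)
    (hξ2 : Integrable (fun ω => ‖ξ ω‖ ^ 2) μ)
    (G : Ω → EuclideanSpace ℝ (Fin C)) (hG : Measurable G)
    (hGprob : ∀ᵐ ω ∂μ, (∀ i, G ω i ∈ Set.Icc (0 : ℝ) 1) ∧ ∑ i, G ω i = 1)
    (κ : Ω → ℝ) (hκ : κ = fun ω => β * ‖G ω‖ ^ 2 / (2 + β * ‖G ω‖ ^ 2))
    (e : Ω → EuclideanSpace ℝ (Fin p))
    (he : ∀ᵐ ω ∂μ, ∀ j, e ω j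
      = (1 + κ ω) * (∑ c, (P c ω - Φ c (x ω)) * w c j) + κ ω * ξ ω j)
    (A E : Fin C → ℝ) (hA : ∀ c, 0 ≤ A c) (hE : ∀ c, 0 ≤ E c)
    (happrox : ∀ c, ∫ ω, |Φ c (x ω) - P c ω| ^ 2 ∂μ
      ≤ (1 + η) * A c + (1 + η⁻¹) * E c) :
    ∫ ω, ‖e ω‖ ^ 2 ∂μ
      ≤ (1 + ρ) * (1 + η) * (1 + β / (2 + β)) ^ 2 * (∑ c, ‖w c‖ ^ 2) * (∑ c, A c)
        + (1 + ρ) * (1 + η⁻¹) * (1 + β / (2 + β)) ^ 2 * (∑ c, ‖w c‖ ^ 2) * (∑ c, E c)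
        + (1 + ρ⁻¹) * (β / (2 + β)) ^ 2 * ∫ ω, ‖ξ ω‖ ^ 2 ∂μ :=
  encoding_error_bound_decomposition_general μ n C p x hx y P hP β hβ ρ hρ η Φ hΦmeas hΦ01 w ξ hξ2 G
    hGprob κ hκ e he A E happrox
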